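/- Let p > 1, λ = λ₀(p) = (2/π)·arccos((p−1)/(p+1)), and define v₁(τ,θ) = e^{λτ}·(cot(λπ/4) + tan(λπ/2))·sin λθ and v₂(τ,θ) = e^{λτ}·(cos λθ + tan(λπ/2)·sin λθ) on ℝ × [0,π/4] and ℝ × [π/4,π/2] respectively. Then: (i) both v₁ and v₂ satisfy ∂²v/∂τ² + ∂²v/∂θ² = 0; (ii) v₁(τ,0) = 0 for all τ; (iii) ∂v₂/∂θ(τ,π/2) = 0 for all τ; (iv) v₁(τ,π/4) = v₂(τ,π/4) for all τ; and (v) ∂v₁/∂θ(τ,π/4) = p·∂v₂/∂θ(τ,π/4) for all τ. Hence the leading order singular term u₁ = r^λ(cot(λπ/4)+tan(λπ/2)) sin λθ in Ω₁, u₂ = r^λ(cos λθ + tan(λπ/2) sin λθ) in Ω₂ solves the interface problem with zero right-hand side in the modified polar coordinates (τ,θ) = (ln r, θ). -/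

import Mathlib

/-!
Each vᵢ has the separated form e^{λτ} W(θ) with W = A cos λθ + B sin λθ, and W'' = -λ² W exactly
cancels the τ-part, so both are harmonic. With a = λπ/4, the choice of λ means
cos 2a = (p - 1)/(p + 1), which is equivalent to cos² a = p sin² a; the Neumann condition is
tan 2a · cos 2a = sin 2a, continuity is cot a · sin a = cos a, and the flux condition reduces,
after clearing denominators, to cos² a = p sin² a.
-/

open Real

lemma hasDerivAt_cos_sin_comb (l A B t : ℝ) :
    HasDerivAt (fun θ => A * cos (l * θ) + B * sin (l * θ))
      (l * (B * cos (l * t) - A * sin (l * t))) t := by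
  have hl : HasDerivAt (fun θ => l * θ) l t := by simpa using (hasDerivAt_id t).const_mul l
  exact ((hl.cos.const_mul A).add (hl.sin.const_mul B)).congr_deriv (by ring)

lemma deriv_cos_sin_comb (l A B : ℝ) :
    deriv (fun θ => A * cos (l * θ) + B * sin (l * θ)) =
      fun t => l * (B * cos (l * t) - A * sin (l * t)) :=
  funext fun t => (hasDerivAt_cos_sin_comb l A B t).deriv

lemma deriv_deriv_cos_sin_comb (l A B : ℝ) :
    deriv (deriv fun θ => A * cos (l * θ) + B * sin (l * θ)) =
      fun t => -l ^ 2 * (A * cos (l * t) + B * sin (l * t)) := by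
  have h : (fun t => l * (B * cos (l * t) - A * sin (l * t))) =
      fun t => l * (B * cos (l * t) + -A * sin (l * t)) := by
    funext t; ring
  rw [deriv_cos_sin_comb, h, deriv_const_mul_field', deriv_cos_sin_comb]
  funext t; ring

lemma deriv_exp_mul_mul_const (l C : ℝ) :
    deriv (fun s => exp (l * s) * C) = fun s => exp (l * s) * (l * C) := by
  funext s
  have hl : HasDerivAt (fun s => l * s) l s := by simpa using (hasDerivAt_id s).const_mul l
  rw [(hl.exp.mul_const C).deriv]; ring

lemma deriv_deriv_exp_mul_add_deriv_deriv_eq_zero (l : ℝ) (W : ℝ → ℝ)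
    (hW : deriv (deriv W) = fun θ => -l ^ 2 * W θ) (τ θ : ℝ) :
    deriv (deriv fun s => exp (l * s) * W θ) τ +
      deriv (deriv fun t => exp (l * τ) * W t) θ = 0 := by
  rw [deriv_exp_mul_mul_const, deriv_exp_mul_mul_const, deriv_const_mul_field',
    deriv_const_mul_field', hW]
  ring

lemma sin_lambdaZero_mul_pi_div_four_pos {p : ℝ} (hp : -1 < p) :
    0 < sin (2 / π * arccos ((p - 1) / (p + 1)) * π / 4) := by
  have hc : (p - 1) / (p + 1) < 1 := (div_lt_one (by linarith)).2 (by linarith)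
  rw [show 2 / π * arccos ((p - 1) / (p + 1)) * π / 4 = arccos ((p - 1) / (p + 1)) / 2 by
    field_simp; ring]
  exact sin_pos_of_pos_of_lt_pi (half_pos (arccos_pos.2 hc))
    (by linarith [arccos_le_pi ((p - 1) / (p + 1)), pi_pos])

lemma cos_lambdaZero_mul_pi_div_two {p : ℝ} (hp : 0 ≤ p) :
    cos (2 / π * arccos ((p - 1) / (p + 1)) * π / 2) = (p - 1) / (p + 1) := by
  rw [show 2 / π * arccos ((p - 1) / (p + 1)) * π / 2 = arccos ((p - 1) / (p + 1)) by
    field_simp]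
  exact cos_arccos ((le_div_iff₀ (by linarith)).2 (by linarith))
    ((div_le_one (by linarith)).2 (by linarith))

lemma cos_sq_eq_mul_sin_sq_of_cos_two_mul {p a : ℝ} (hp : p + 1 ≠ 0)
    (h : cos (2 * a) = (p - 1) / (p + 1)) : cos a ^ 2 = p * sin a ^ 2 := by
  rw [cos_two_mul', eq_div_iff hp] at h
  linear_combination h / 2 - (p - 1) / 2 * sin_sq_add_cos_sq a

lemma cot_add_tan_two_mul_mul_cos {p a : ℝ} (hs : sin a ≠ 0) (hc : cos (2 * a) ≠ 0)
    (h : cos a ^ 2 = p * sin a ^ 2) :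
    (cot a + tan (2 * a)) * cos a = p * (tan (2 * a) * cos a - sin a) := by
  rw [cot_eq_cos_div_sin, tan_eq_sin_div_cos, sin_two_mul]
  rw [cos_two_mul'] at hc ⊢
  field_simp
  linear_combination (cos a ^ 2 - sin a ^ 2 + 2 * sin a ^ 2) * h

/-- For p > 1 and λ = λ₀(p) = (2/π)·arccos((p−1)/(p+1)), the functions
v₁(τ,θ) = e^{λτ}(cot(λπ/4)+tan(λπ/2)) sin λθ and v₂(τ,θ) = e^{λτ}(cos λθ + tan(λπ/2) sin λθ)
solve the interface problem with zero right-hand side in the modified polar coordinates: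
(i) both are harmonic in (τ,θ), (ii) v₁ vanishes on θ = 0, (iii) ∂v₂/∂θ vanishes on
θ = π/2, (iv) v₁ = v₂ on θ = π/4, and (v) ∂v₁/∂θ = p·∂v₂/∂θ on θ = π/4. -/
theorem leading_singular_term_solves_interface_problem (p : ℝ) (hp : 1 < p) (lam : ℝ)
    (hlam : lam = (2 / π) * Real.arccos ((p - 1) / (p + 1)))
    (v₁ v₂ : ℝ → ℝ → ℝ)
    (hv₁ : v₁ = fun τ θ => Real.exp (lam * τ) *
      ((Real.cot (lam * π / 4) + Real.tan (lam * π / 2)) * Real.sin (lam * θ)))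
    (hv₂ : v₂ = fun τ θ => Real.exp (lam * τ) *
      (Real.cos (lam * θ) + Real.tan (lam * π / 2) * Real.sin (lam * θ))) :
    (∀ τ : ℝ, ∀ θ ∈ Set.Icc (0 : ℝ) (π / 4),
      deriv (deriv (fun s : ℝ => v₁ s θ)) τ + deriv (deriv (fun t : ℝ => v₁ τ t)) θ = 0) ∧
    (∀ τ : ℝ, ∀ θ ∈ Set.Icc (π / 4) (π / 2),
      deriv (deriv (fun s : ℝ => v₂ s θ)) τ + deriv (deriv (fun t : ℝ => v₂ τ t)) θ = 0) ∧
    (∀ τ : ℝ, v₁ τ 0 = 0) ∧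
    (∀ τ : ℝ, deriv (fun t : ℝ => v₂ τ t) (π / 2) = 0) ∧
    (∀ τ : ℝ, v₁ τ (π / 4) = v₂ τ (π / 4)) ∧
    (∀ τ : ℝ, deriv (fun t : ℝ => v₁ τ t) (π / 4) =
      p * deriv (fun t : ℝ => v₂ τ t) (π / 4)) := by
  have hsin_ne : sin (lam * π / 4) ≠ 0 :=
    hlam ▸ (sin_lambdaZero_mul_pi_div_four_pos (by linarith)).ne'
  have hcos : cos (lam * π / 2) = (p - 1) / (p + 1) :=
    hlam ▸ cos_lambdaZero_mul_pi_div_two (by linarith)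
  have hcos_ne : cos (lam * π / 2) ≠ 0 := hcos ▸ (div_pos (by linarith) (by linarith)).ne'
  have h2a : lam * π / 2 = 2 * (lam * π / 4) := by ring
  set a := lam * π / 4
  rw [h2a] at hv₁ hv₂ hcos hcos_ne
  set K := cot a + tan (2 * a) with hK
  set T := tan (2 * a) with hT
  have hd₁ := deriv_cos_sin_comb lam 0 K
  have hW₁ := deriv_deriv_cos_sin_comb lam 0 K
  have hd₂ := deriv_cos_sin_comb lam 1 T
  have hW₂ := deriv_deriv_cos_sin_comb lam 1 T
  simp only [zero_mul, zero_add, sub_zero, one_mul] at hd₁ hW₁ hd₂ hW₂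
  subst hv₁ hv₂
  refine ⟨fun τ θ _ => deriv_deriv_exp_mul_add_deriv_deriv_eq_zero lam _ hW₁ τ θ,
    fun τ θ _ => deriv_deriv_exp_mul_add_deriv_deriv_eq_zero lam _ hW₂ τ θ,
    fun τ => by simp, fun τ => ?_, fun τ => ?_, fun τ => ?_⟩
  all_goals simp only [deriv_const_mul_field', hd₁, hd₂, ← mul_div_assoc]
  · rw [h2a, hT, tan_mul_cos hcos_ne, sub_self, mul_zero, mul_zero]
  · rw [hK, add_mul, cot_eq_cos_div_sin, div_mul_cancel₀ _ hsin_ne]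
  · have hcot_sq := cos_sq_eq_mul_sin_sq_of_cos_two_mul (by linarith) hcos
    linear_combination exp (lam * τ) * lam * cot_add_tan_two_mul_mul_cos hsin_ne hcos_ne hcot_sq
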